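/- (Second nonempty Terracini locus of cubic Veronese varieties, set-level characterization.) Let K be an algebraically closed field of characteristic 0 and let n ≥ 3. For a set S of 4 distinct points of ℙ^n, the double points 2S fail to impose independent conditions on degree-3 forms (equivalently, ν_3(S) ∈ Ter_4(V_n^3)) if and only if the 4 points are coplanar, i.e., their representative vectors lie in a subspace of K^{n+1} of dimension ≤ 3. -/

import Mathlib

/-!
The forms of degree `d` singular at the points `p a` are the kernel of `f ↦ (∇f(p a))ₐ` on forms
of degree `d`, so `2p` imposes independent conditions exactly when this map is surjective.

If the points are linearly independent and `d ≥ 3`, take linear forms `Λₐ` with `Λₐ(p b) = δ(a, b)`;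
the form `Λₐ^(d-1) xᵢ - (d-1)/d · (p a)ᵢ Λₐ^d` has gradient `eᵢ` at `p a` and `0` at the other
points, so the map is onto.

If instead the points span a space of dimension `m`, composing with the inclusion of that space
(chain rule) turns surjectivity for the points into surjectivity for their coordinates in `Kᵐ`.
For four points and cubics this needs `4m ≤ C(m+2, 3)`, which fails for `1 ≤ m ≤ 3`.
-/

open MvPolynomial

/-- Homogeneous forms of degree `d` in `N` variables all of whose first-order partial
derivatives vanish at every point of the family `p`. -/
noncomputable def dblVanish (K : Type) [Field K] (N d : ℕ) {ι : Type} (p : ι → (Fin N → K)) :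
    Submodule K (MvPolynomial (Fin N) K) :=
  homogeneousSubmodule (Fin N) K d ⊓
    ⨅ (a : ι) (i : Fin N),
      LinearMap.ker ((aeval (p a)).toLinearMap ∘ₗ (pderiv i).toLinearMap)

open Module Matrix

theorem LinearIndependent.exists_mul_transpose_eq_one {K ι σ : Type*} [Field K] [Fintype ι]
    [DecidableEq ι] [Fintype σ] {v : ι → σ → K} (hv : LinearIndependent K v) :
    ∃ L : Matrix ι σ K, L * (of v)ᵀ = 1 := by
  rw [← vecMul_surjective_iff_exists_left_inverse]
  have hrank : finrank K (LinearMap.range (of v).mulVecLin) = finrank K (ι → K) := by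
    rw [finrank_fintype_fun_eq_card]
    exact hv.rank_matrix
  intro y
  obtain ⟨x, hx⟩ := LinearMap.range_eq_top.mp (Submodule.eq_top_of_finrank_eq hrank) y
  exact ⟨x, (vecMul_transpose _ x).trans hx⟩

namespace MvPolynomial

variable {σ : Type*}

theorem pderiv_aeval {R τ : Type*} [CommSemiring R] [Fintype τ] (g : τ → MvPolynomial σ R) (i : σ)
    (f : MvPolynomial τ R) :
    pderiv i (aeval g f) = ∑ j, aeval g (pderiv j f) * pderiv i (g j) := by
  classical
  induction f using MvPolynomial.induction_on with
  | C a => simp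
  | add p q hp hq => simp only [map_add, add_mul, Finset.sum_add_distrib, hp, hq]
  | mul_X p k hp =>
    simp only [map_mul, aeval_X, pderiv_mul, hp, pderiv_X, map_add, add_mul,
      Finset.sum_add_distrib, Finset.sum_mul, Pi.single_apply, eq_comm (a := k)]
    simp [mul_right_comm]

instance {R : Type*} [CommSemiring R] [Finite σ] (d : ℕ) : Module.Finite R (homogeneousSubmodule σ R d) :=
  Module.Finite.iff_fg.mpr (homogeneousSubmodule_fg σ R d)

theorem finrank_homogeneousSubmodule {R : Type*} [CommRing R] [Nontrivial R] [Fintype σ]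
    (d : ℕ) :
    finrank R (homogeneousSubmodule σ R d) = (Fintype.card σ + d - 1).choose d := by
  classical
  have hdeg : {f : σ →₀ ℕ | f.degree = d} = ↑((Finset.univ : Finset σ).finsuppAntidiag d) := by
    ext f
    simp [Finsupp.degree_eq_sum]
  rw [homogeneousSubmodule_eq_finsupp_supported]
  refine (finrank_eq_nat_card_basis (basisRestrictSupport R {f : σ →₀ ℕ | f.degree = d})).trans ?_
  rw [hdeg, Nat.card_coe_set_eq, Set.ncard_coe_finset, Finset.card_finsuppAntidiag_nat_eq_choose,
    Finset.card_univ]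

end MvPolynomial

namespace Matrix

variable {m n R : Type*} [Fintype n] [CommSemiring R]

theorem aeval_toMvPolynomial (M : Matrix m n R) (i : m) (c : n → R) :
    aeval c (M.toMvPolynomial i) = (M *ᵥ c) i :=
  toMvPolynomial_eval_eq_apply M i c

theorem pderiv_toMvPolynomial (M : Matrix m n R) (i : m) (j : n) :
    pderiv j (M.toMvPolynomial i) = C (M i j) := by
  classical
  simp [toMvPolynomial, ← C_mul_X_eq_monomial, pderiv_X, Pi.single_apply]

end Matrix

section Gradients

variable {K σ τ ι : Type*} [Field K]

noncomputable def gradientsAt (p : ι → σ → K) : MvPolynomial σ K →ₗ[K] ι → σ → K :=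
  LinearMap.pi fun a => LinearMap.pi fun i => (aeval (p a)).toLinearMap ∘ₗ (pderiv i).toLinearMap

@[simp]
theorem gradientsAt_apply (p : ι → σ → K) (f : MvPolynomial σ K) (a : ι) (i : σ) :
    gradientsAt p f a i = aeval (p a) (pderiv i f) :=
  rfl

def ImposesIndependentConditions (d : ℕ) (p : ι → σ → K) : Prop :=
  Function.Surjective ((gradientsAt p).domRestrict (homogeneousSubmodule σ K d))

theorem gradientsAt_aeval_toMvPolynomial [Fintype σ] [Fintype τ] (P : Matrix σ τ K)
    (c : ι → τ → K) (f : MvPolynomial σ K) (a : ι) :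
    gradientsAt c (aeval P.toMvPolynomial f) a = gradientsAt (fun a => P *ᵥ c a) f a ᵥ* P := by
  ext k
  simp only [gradientsAt_apply, pderiv_aeval, pderiv_toMvPolynomial, map_sum, map_mul,
    comp_aeval_apply, Matrix.aeval_toMvPolynomial, aeval_C, Algebra.algebraMap_self,
    RingHom.id_apply, vecMul, dotProduct]

theorem exists_homogeneous_gradientsAt_eq_single [CharZero K] [Fintype σ] [DecidableEq σ]
    [Fintype ι] [DecidableEq ι] {d : ℕ} (hd : 3 ≤ d) {p : ι → σ → K} (hp : LinearIndependent K p)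
    (a : ι) (i : σ) :
    ∃ g ∈ homogeneousSubmodule σ K d, gradientsAt p g = Pi.single a (Pi.single i 1) := by
  obtain ⟨L, hL⟩ := hp.exists_mul_transpose_eq_one
  have hL_eval : ∀ b, eval (p b) (L.toMvPolynomial a) = if a = b then 1 else 0 := fun b => by
    simpa [toMvPolynomial_eval_eq_apply, mul_apply, mulVec, dotProduct, one_apply] using
      congrFun (congrFun hL a) b
  obtain ⟨k, rfl⟩ := Nat.exists_eq_add_of_le' hd
  have hΛ := toMvPolynomial_isHomogeneous L a
  refine ⟨L.toMvPolynomial a ^ (k + 2) * X i -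
    C ((k + 2) / (k + 3) * p a i) * L.toMvPolynomial a ^ (k + 3), ?_, ?_⟩
  · refine IsHomogeneous.sub ?_ ?_
    · simpa using (hΛ.pow (k + 2)).mul (isHomogeneous_X K i)
    · simpa using (isHomogeneous_C σ ((k + 2) / (k + 3) * p a i : K)).mul (hΛ.pow (k + 3))
  · ext b j
    simp only [gradientsAt_apply, map_sub, map_mul, pderiv_mul, pderiv_pow, pderiv_toMvPolynomial,
      pderiv_X]
    by_cases hab : a = b
    · subst hab
      have hk : (k : K) + 3 ≠ 0 := by exact_mod_cast Nat.succ_ne_zero (k + 2)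
      rcases eq_or_ne i j with rfl | hij
      · simp [hL_eval]
        field_simp
        ring
      · simp [hL_eval, hij, hij.symm]
        field_simp
        ring
    · simp [hL_eval, hab, Pi.single_apply, Ne.symm hab, apply_ite]

theorem imposesIndependentConditions_of_linearIndependent [CharZero K] [Fintype σ]
    [DecidableEq σ] [Fintype ι] [DecidableEq ι] {d : ℕ} (hd : 3 ≤ d) {p : ι → σ → K}
    (hp : LinearIndependent K p) : ImposesIndependentConditions d p := by
  choose g hg_mem hg using exists_homogeneous_gradientsAt_eq_single hd hp
  intro t
  refine ⟨⟨∑ a, ∑ i, t a i • g a i, sum_mem fun a _ => sum_mem fun i _ =>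
    Submodule.smul_mem _ _ (hg_mem a i)⟩, ?_⟩
  change gradientsAt p (∑ a, ∑ i, t a i • g a i) = t
  simp only [map_sum, map_smul, hg]
  ext b j
  simp [Finset.sum_apply, Pi.single_apply, ite_apply]

theorem ImposesIndependentConditions.of_mulVec [Fintype σ] [Fintype τ] [DecidableEq τ] {d : ℕ}
    {P : Matrix σ τ K} {Q : Matrix τ σ K} (hQP : Q * P = 1) {c : ι → τ → K}
    (h : ImposesIndependentConditions d fun a => P *ᵥ c a) : ImposesIndependentConditions d c := by
  intro t
  obtain ⟨⟨f, hf⟩, hft⟩ := h fun a => t a ᵥ* Q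
  refine ⟨⟨aeval P.toMvPolynomial f, ?_⟩, ?_⟩
  · simpa using hf.aeval _ (toMvPolynomial_isHomogeneous P)
  · funext a
    have hfa : gradientsAt (fun a => P *ᵥ c a) f a = t a ᵥ* Q := congrFun hft a
    change gradientsAt c (aeval P.toMvPolynomial f) a = t a
    rw [gradientsAt_aeval_toMvPolynomial, hfa, vecMul_vecMul, hQP, vecMul_one]

theorem ImposesIndependentConditions.card_mul_card_le [Fintype σ] [Fintype ι] {d : ℕ}
    {p : ι → σ → K} (h : ImposesIndependentConditions d p) :
    Fintype.card ι * Fintype.card σ ≤ (Fintype.card σ + d - 1).choose d := by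
  simpa [finrank_homogeneousSubmodule, finrank_pi_fintype] using
    LinearMap.finrank_le_finrank_of_surjective h

theorem not_imposesIndependentConditions_of_finrank_span [Fintype σ] [Fintype ι] {d m : ℕ}
    {p : ι → σ → K} (hm : finrank K (Submodule.span K (Set.range p)) = m)
    (hlt : (m + d - 1).choose d < Fintype.card ι * m) : ¬ ImposesIndependentConditions d p := by
  classical
  set W := Submodule.span K (Set.range p)
  let b := finBasisOfFinrankEq K W hm
  obtain ⟨Q, hQ⟩ :=
    (b.linearIndependent.map' W.subtype W.ker_subtype).exists_mul_transpose_eq_one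
  have hp_mem a : p a ∈ W := Submodule.subset_span (Set.mem_range_self a)
  have hpc : p = fun a => (of (W.subtype ∘ b))ᵀ *ᵥ b.repr ⟨p a, hp_mem a⟩ := by
    funext a
    rw [mulVec_transpose, vecMul_eq_sum]
    have := congrArg Subtype.val (b.sum_repr ⟨p a, hp_mem a⟩)
    rw [Submodule.coe_sum] at this
    exact this.symm
  intro h
  rw [hpc] at h
  have := (h.of_mulVec hQ).card_mul_card_le
  simp only [Fintype.card_fin] at this
  omega

end Gradients

theorem dblVanish_eq_map_ker {K ι : Type} [Field K] (N d : ℕ) (p : ι → Fin N → K) :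
    dblVanish K N d p = (LinearMap.ker ((gradientsAt p).domRestrict
      (homogeneousSubmodule (Fin N) K d))).map (homogeneousSubmodule (Fin N) K d).subtype := by
  rw [LinearMap.ker_domRestrict, Submodule.map_comap_subtype, dblVanish]
  congr 1
  ext f
  simp [Submodule.mem_iInf, funext_iff]

theorem not_imposesIndependentConditions_iff_lt_finrank_dblVanish {K ι : Type} [Field K]
    [Fintype ι] (N d : ℕ) (p : ι → Fin N → K) :
    ¬ ImposesIndependentConditions d p ↔
      (N + d - 1).choose d < finrank K (dblVanish K N d p) + Fintype.card ι * N := by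
  set φ := (gradientsAt p).domRestrict (homogeneousSubmodule (Fin N) K d)
  have hker : finrank K (dblVanish K N d p) = finrank K (LinearMap.ker φ) := by
    rw [dblVanish_eq_map_ker, Submodule.finrank_map_subtype_eq]
  have hrank := φ.finrank_range_add_finrank_ker
  rw [finrank_homogeneousSubmodule, Fintype.card_fin] at hrank
  have hcod : finrank K (ι → Fin N → K) = Fintype.card ι * N := by
    simp [finrank_pi_fintype]
  have hle : finrank K (LinearMap.range φ) ≤ Fintype.card ι * N :=
    hcod ▸ Submodule.finrank_le _
  have hsurj : ImposesIndependentConditions d p ↔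
      finrank K (LinearMap.range φ) = Fintype.card ι * N := by
    rw [ImposesIndependentConditions, ← LinearMap.range_eq_top, ← hcod,
      Submodule.eq_top_iff_finrank_eq]
  rw [hsurj, hker]
  omega

theorem second_terracini_cubic_iff_coplanar
    {K : Type} [Field K] [CharZero K]
    (n : ℕ)
    (S : Fin 4 → (Fin (n + 1) → K))
    (hS0 : ∀ i, S i ≠ 0) :
    Nat.choose (n + 3) 3 <
        Module.finrank K ↥(dblVanish K (n + 1) 3 S) + 4 * (n + 1) ↔
      Module.finrank K ↥(Submodule.span K (Set.range S)) ≤ 3 := by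
  classical
  have key := not_imposesIndependentConditions_iff_lt_finrank_dblVanish (n + 1) 3 S
  rw [Fintype.card_fin, show n + 1 + 3 - 1 = n + 3 by omega] at key
  rw [← key]
  set m := finrank K (Submodule.span K (Set.range S)) with hm
  have hm4 : m ≤ 4 := by simpa [Set.finrank] using finrank_range_le_card (R := K) S
  have hm0 : 0 < m := Nat.pos_of_ne_zero <| by
    rw [hm, Ne, Submodule.finrank_eq_zero, Submodule.span_eq_bot]
    exact fun h => hS0 0 (h _ (Set.mem_range_self 0))
  constructor
  · intro hnot
    by_contra! h4
    refine hnot (imposesIndependentConditions_of_linearIndependent le_rfl ?_)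
    rw [linearIndependent_iff_card_eq_finrank_span, Set.finrank, Fintype.card_fin]
    omega
  · intro hm3
    refine not_imposesIndependentConditions_of_finrank_span hm.symm ?_
    interval_cases m <;> decide
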